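/- arXiv:2304.00615 — 5 statements merged into one kernel-verified Lean document; each statement's English description precedes it below -/
import Mathlib

section
/- Let R be a finite type and f : R → ℝ an injective function whose attained values are equally spaced with gap k > 0. Then f is an interval scale: for all a, b, c, d ∈ R with f(a) ≤ f(b) and f(c) ≤ f(d), the cardinality of {r ∈ R : f(a) ≤ f(r) ≤ f(b)} is at most the cardinality of {r ∈ R : f(c) ≤ f(r) ≤ f(d)} if and only if f(b) − f(a) ≤ f(d) − f(c). -/
/-! Counting down from `b` through immediate predecessors: each step leaves the interval
`[a, b]_f` by exactly one point (injectivity) and lowers the value by exactly `k`, so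
`#[a, b]_f • k = f b - f a + k`. Scaling by `k > 0` preserves `≤` on spans, and the
common offset `k` cancels. -/

section

open Set

variable {R α : Type*} [LinearOrder α]

def EquallySpaced [Sub α] (f : R → α) (k : α) : Prop :=
  ∀ x y : R, f x < f y → (¬ ∃ z : R, f x < f z ∧ f z < f y) → f y - f x = k

lemma preimage_Icc_eq_insert_of_max_lt {f : R → α} (hf : Function.Injective f) {a b c : R}
    (hac : f a ≤ f c) (hcb : f c < f b) (hmax : ∀ z, f z < f b → f z ≤ f c) :
    f ⁻¹' Icc (f a) (f b) = insert b (f ⁻¹' Icc (f a) (f c)) := by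
  ext z
  simp only [mem_preimage, mem_Icc, mem_insert_iff]
  constructor
  · rintro ⟨haz, hzb⟩
    rcases hzb.lt_or_eq with hzb | hzb
    · exact Or.inr ⟨haz, hmax z hzb⟩
    · exact Or.inl (hf hzb)
  · rintro (rfl | ⟨haz, hzc⟩)
    · exact ⟨hac.trans hcb.le, le_rfl⟩
    · exact ⟨haz, hzc.trans hcb.le⟩

theorem EquallySpaced.ncard_preimage_Icc_nsmul [AddCommGroup α] [IsOrderedAddMonoid α] [Finite R]
    {f : R → α} {k : α}
    (hes : EquallySpaced f k) (hf : Function.Injective f) {a b : R} (hab : f a ≤ f b) :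
    (f ⁻¹' Icc (f a) (f b)).ncard • k = f b - f a + k := by
  induction hn : (f ⁻¹' Icc (f a) (f b)).ncard generalizing b with
  | zero =>
    have ha : a ∈ f ⁻¹' Icc (f a) (f b) := ⟨le_rfl, hab⟩
    exact absurd hn ((ncard_pos (toFinite _)).mpr ⟨a, ha⟩).ne'
  | succ n ih =>
    rcases hab.lt_or_eq with hab | hab
    · obtain ⟨c, hcb, hmax⟩ := exists_max_image {z | f z < f b} f (toFinite _) ⟨a, hab⟩
      have hac : f a ≤ f c := hmax a hab
      have hgap : f b - f c = k :=
        hes c b hcb fun ⟨z, hcz, hzb⟩ => (hmax z hzb).not_gt hcz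
      have hb : b ∉ f ⁻¹' Icc (f a) (f c) := fun h => h.2.not_gt hcb
      rw [preimage_Icc_eq_insert_of_max_lt hf hac hcb hmax, ncard_insert_of_notMem hb] at hn
      rw [succ_nsmul, ih hac (Nat.succ_injective hn), ← hgap]
      abel
    · have hsingle : f ⁻¹' Icc (f a) (f b) = {a} := by
        rw [← hab, Icc_self, ← image_singleton, hf.preimage_image]
      rw [hsingle, ncard_singleton] at hn
      rw [← hn, hab, one_nsmul, sub_self, zero_add]

end

/-- An injective measure `f` on a finite type whose attained values are equally
spaced with gap `k > 0` is an interval scale: the span (cardinality) of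
intervals is ordered exactly as the corresponding differences of values. -/
theorem interval_scale_of_equally_spaced {R : Type*} [Fintype R] (f : R → ℝ)
    (hf : Function.Injective f) (k : ℝ) (hk : 0 < k)
    (hes : ∀ x y : R, f x < f y → (¬ ∃ z : R, f x < f z ∧ f z < f y) →
      f y - f x = k) :
    ∀ a b c d : R, f a ≤ f b → f c ≤ f d →
      ({r : R | f a ≤ f r ∧ f r ≤ f b}.ncard ≤ {r : R | f c ≤ f r ∧ f r ≤ f d}.ncard ↔
        f b - f a ≤ f d - f c) := by
  intro a b c d hab hcd
  rw [← nsmul_le_nsmul_iff_left hk]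
  change (f ⁻¹' Set.Icc (f a) (f b)).ncard • k ≤ (f ⁻¹' Set.Icc (f c) (f d)).ncard • k ↔ _
  rw [EquallySpaced.ncard_preimage_Icc_nsmul hes hf hab,
    EquallySpaced.ncard_preimage_Icc_nsmul hes hf hcd, add_le_add_iff_right]
end

section
/- Let R be a finite type with at least two elements and f : R → ℝ an injective function that is an interval scale. Then the attained values of f are equally spaced: there exists k > 0 such that for all x, y ∈ R with f(x) < f(y) and no z ∈ R with f(x) < f(z) < f(y), one has f(y) − f(x) = k. -/
/-! Two consecutive values `f x < f y` of an injective `f` bound an interval containing exactly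
`x` and `y`, so all such intervals have span `2`; an interval scale then forces all consecutive
gaps to be equal. -/

open Function

theorem setOf_le_and_le_eq_pair_of_no_mem_between {α β : Type*} [PartialOrder β] {f : α → β}
    (hf : Injective f) {x y : α} (hxy : f x ≤ f y) (hgap : ¬∃ z, f x < f z ∧ f z < f y) :
    {r | f x ≤ f r ∧ f r ≤ f y} = {x, y} := by
  ext r
  simp only [Set.mem_ofPred_eq, Set.mem_insert_iff, Set.mem_singleton_iff]
  constructor
  · rintro ⟨hxr, hry⟩
    rcases hxr.eq_or_lt with hxr | hxr
    · exact Or.inl (hf hxr).symm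
    rcases hry.eq_or_lt with hry | hry
    · exact Or.inr (hf hry)
    exact (hgap ⟨r, hxr, hry⟩).elim
  · rintro (rfl | rfl)
    exacts [⟨le_rfl, hxy⟩, ⟨hxy, le_rfl⟩]

theorem ncard_setOf_le_and_le_of_no_mem_between {α β : Type*} [PartialOrder β] {f : α → β}
    (hf : Injective f) {x y : α} (hxy : f x < f y) (hgap : ¬∃ z, f x < f z ∧ f z < f y) :
    {r | f x ≤ f r ∧ f r ≤ f y}.ncard = 2 := by
  rw [setOf_le_and_le_eq_pair_of_no_mem_between hf hxy.le hgap,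
    Set.ncard_pair (hf.ne_iff.1 hxy.ne)]

theorem equally_spaced_of_interval_scale_general {R : Type*}
    (f : R → ℝ) (hf : Function.Injective f)
    (hscale : ∀ a b c d : R, f a ≤ f b → f c ≤ f d →
      ({r : R | f a ≤ f r ∧ f r ≤ f b}.ncard ≤ {r : R | f c ≤ f r ∧ f r ≤ f d}.ncard ↔
        f b - f a ≤ f d - f c)) :
    ∃ k : ℝ, 0 < k ∧ ∀ x y : R, f x < f y →
      (¬ ∃ z : R, f x < f z ∧ f z < f y) → f y - f x = k := by
  by_cases hpair : ∃ a b : R, f a < f b ∧ ¬∃ z, f a < f z ∧ f z < f b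
  · obtain ⟨a, b, hab, hgap_ab⟩ := hpair
    refine ⟨f b - f a, sub_pos.2 hab, fun x y hxy hgap_xy => ?_⟩
    have hspan : {r | f x ≤ f r ∧ f r ≤ f y}.ncard = {r | f a ≤ f r ∧ f r ≤ f b}.ncard := by
      rw [ncard_setOf_le_and_le_of_no_mem_between hf hxy hgap_xy,
        ncard_setOf_le_and_le_of_no_mem_between hf hab hgap_ab]
    exact le_antisymm ((hscale x y a b hxy.le hab.le).1 hspan.le)
      ((hscale a b x y hab.le hxy.le).1 hspan.ge)
  · exact ⟨1, one_pos, fun x y hxy hgap => (hpair ⟨x, y, hxy, hgap⟩).elim⟩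

/-- An injective interval scale `f` on a finite type with at least two elements
has equally spaced attained values: there is a common gap `k > 0` between
consecutive attained values. -/
theorem equally_spaced_of_interval_scale {R : Type*} [Fintype R]
    (hR : 2 ≤ Fintype.card R) (f : R → ℝ) (hf : Function.Injective f)
    (hscale : ∀ a b c d : R, f a ≤ f b → f c ≤ f d →
      ({r : R | f a ≤ f r ∧ f r ≤ f b}.ncard ≤ {r : R | f c ≤ f r ∧ f r ≤ f d}.ncard ↔
        f b - f a ≤ f d - f c)) :
    ∃ k : ℝ, 0 < k ∧ ∀ x y : R, f x < f y →
      (¬ ∃ z : R, f x < f z ∧ f z < f y) → f y - f x = k :=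
  equally_spaced_of_interval_scale_general f hf hscale
end

section
/- Let R be a finite type with at least two elements and f : R → ℝ an injective function that is an interval scale. Then the quantity f(b) − f(a) is the same strictly positive constant for every prime interval [a,b]_f: there exists k > 0 such that for all a, b ∈ R with f(a) < f(b) and {r ∈ R : f(a) ≤ f(r) ≤ f(b)} = {a, b}, one has f(b) − f(a) = k. -/
def IsIntervalScale {R : Type*} (f : R → ℝ) : Prop :=
  ∀ a b c d : R, f a ≤ f b → f c ≤ f d →
    ({r : R | f a ≤ f r ∧ f r ≤ f b}.ncard ≤ {r : R | f c ≤ f r ∧ f r ≤ f d}.ncard ↔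
      f b - f a ≤ f d - f c)

theorem IsIntervalScale.sub_eq_sub_of_ncard_eq {R : Type*} {f : R → ℝ}
    (hscale : IsIntervalScale f) {a b c d : R} (hab : f a ≤ f b) (hcd : f c ≤ f d)
    (hspan : {r : R | f a ≤ f r ∧ f r ≤ f b}.ncard = {r : R | f c ≤ f r ∧ f r ≤ f d}.ncard) :
    f b - f a = f d - f c :=
  le_antisymm ((hscale a b c d hab hcd).mp hspan.le) ((hscale c d a b hcd hab).mp hspan.ge)

theorem constant_difference_on_prime_intervals_general {R : Type*}
    (f : R → ℝ)
    (hscale : ∀ a b c d : R, f a ≤ f b → f c ≤ f d →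
      ({r : R | f a ≤ f r ∧ f r ≤ f b}.ncard ≤ {r : R | f c ≤ f r ∧ f r ≤ f d}.ncard ↔
        f b - f a ≤ f d - f c)) :
    ∃ k : ℝ, 0 < k ∧ ∀ a b : R, f a < f b →
      {r : R | f a ≤ f r ∧ f r ≤ f b} = {a, b} → f b - f a = k := by
  by_cases hexists : ∃ a b : R, f a < f b ∧ {r : R | f a ≤ f r ∧ f r ≤ f b} = {a, b}
  · obtain ⟨a₀, b₀, hab₀, hprime₀⟩ := hexists
    refine ⟨f b₀ - f a₀, sub_pos.mpr hab₀, fun a b hab hprime => ?_⟩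
    have hscale : IsIntervalScale f := hscale
    refine hscale.sub_eq_sub_of_ncard_eq hab.le hab₀.le ?_
    rw [hprime, hprime₀, Set.ncard_pair (ne_of_apply_ne f hab.ne),
      Set.ncard_pair (ne_of_apply_ne f hab₀.ne)]
  · exact ⟨1, one_pos, fun a b hab hprime => absurd ⟨a, b, hab, hprime⟩ hexists⟩

/-- For an injective interval scale `f` on a finite type with at least two
elements, the difference `f b - f a` is the same strictly positive constant on
every prime interval. -/
theorem constant_difference_on_prime_intervals {R : Type*} [Fintype R]
    (hR : 2 ≤ Fintype.card R) (f : R → ℝ) (hf : Function.Injective f)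
    (hscale : ∀ a b c d : R, f a ≤ f b → f c ≤ f d →
      ({r : R | f a ≤ f r ∧ f r ≤ f b}.ncard ≤ {r : R | f c ≤ f r ∧ f r ≤ f d}.ncard ↔
        f b - f a ≤ f d - f c)) :
    ∃ k : ℝ, 0 < k ∧ ∀ a b : R, f a < f b →
      {r : R | f a ≤ f r ∧ f r ≤ f b} = {a, b} → f b - f a = k :=
  constant_difference_on_prime_intervals_general f hscale
end

section
/- Let 1 ≤ R ≤ L be natural numbers. The set of values Σ_{i∈S} i, as S ranges over all R-element subsets of {1, 2, …, L}, is exactly the set of all integers m with R(R+1)/2 ≤ m ≤ R(2L − R + 1)/2; that is, every integer between the minimum possible sum R(R+1)/2 and the maximum possible sum RL − R(R−1)/2 is attained by some R-element subset of {1, …, L}. -/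
/-!
The `k`-th smallest element of an `R`-subset of `{1, …, L}` is at least `k` and its `k`-th
largest at most `L + 1 - k`, which bounds the sum between `1 + ⋯ + R` and
`L + (L - 1) + ⋯ + (L + 1 - R)`. Conversely a value `m` in that range is realised greedily by
induction on `R`: the largest element is `L` if `m - L` is still large enough to be a sum of
`R - 1` elements below `L`, and otherwise the set is `{1, …, R - 1}` together with
`m - (1 + ⋯ + (R - 1))`.
-/

open Finset

def rankSums (R L : ℕ) : Set ℕ :=
  {m | ∃ S : Finset ℕ, S ⊆ Icc 1 L ∧ S.card = R ∧ ∑ i ∈ S, i = m}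

theorem sum_range_add_le_sum_id (S : Finset ℕ) (a : ℕ) (h : ∀ i ∈ S, a ≤ i) :
    ∑ k ∈ range #S, (a + k) ≤ ∑ i ∈ S, i := by
  induction S using Finset.induction_on_max with
  | empty => simp
  | insert x s hlt ih =>
    have hx : x ∉ s := fun hx => lt_irrefl x (hlt x hx)
    have hcard : #s ≤ x - a := by
      rw [← Nat.card_Ico a x]
      exact card_le_card fun i hi => mem_Ico.2 ⟨h i (mem_insert_of_mem hi), hlt i hi⟩
    have hax : a ≤ x := h x (mem_insert_self x s)
    rw [card_insert_of_notMem hx, sum_range_succ, sum_insert hx]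
    have := ih fun i hi => h i (mem_insert_of_mem hi)
    omega

theorem sum_id_le_sum_range_sub (S : Finset ℕ) (b : ℕ) (h : ∀ i ∈ S, i ≤ b) :
    ∑ i ∈ S, i ≤ ∑ k ∈ range #S, (b - k) := by
  induction S using Finset.induction_on_min with
  | empty => simp
  | insert x s hlt ih =>
    have hx : x ∉ s := fun hx => lt_irrefl x (hlt x hx)
    have hxb : x ≤ b := h x (mem_insert_self x s)
    have hcard : #s ≤ b - x := by
      rw [← Nat.card_Ioc x b]
      exact card_le_card fun i hi => mem_Ioc.2 ⟨hlt i hi, h i (mem_insert_of_mem hi)⟩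
    rw [card_insert_of_notMem hx, sum_range_succ, sum_insert hx]
    have := ih fun i hi => h i (mem_insert_of_mem hi)
    omega

theorem sum_Icc_one_id (n : ℕ) : ∑ i ∈ Icc 1 n, i = ∑ k ∈ range n, (1 + k) := by
  rw [← Ico_add_one_right_eq_Icc, sum_Ico_eq_sum_range, Nat.add_sub_cancel]

theorem two_mul_sum_range_one_add (n : ℕ) : 2 * ∑ k ∈ range n, (1 + k) = n * (n + 1) := by
  induction n with
  | zero => simp
  | succ n ih => rw [sum_range_succ, mul_add, ih]; ring

theorem two_mul_sum_range_sub {n L : ℕ} (h : n ≤ L) :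
    2 * ∑ k ∈ range n, (L - k) = n * (2 * L - n + 1) := by
  induction n with
  | zero => simp
  | succ n ih =>
    rw [sum_range_succ, mul_add, ih (by omega)]
    obtain ⟨d, rfl⟩ : ∃ d, L = n + 1 + d := ⟨L - (n + 1), by omega⟩
    rw [show 2 * (n + 1 + d) - n + 1 = n + 2 * d + 3 by omega,
      show 2 * (n + 1 + d) - (n + 1) + 1 = n + 2 * d + 2 by omega,
      show n + 1 + d - n = d + 1 by omega]
    ring

theorem sum_range_bounds_of_mem_rankSums {R L m : ℕ} (h : m ∈ rankSums R L) :
    ∑ k ∈ range R, (1 + k) ≤ m ∧ m ≤ ∑ k ∈ range R, (L - k) := by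
  obtain ⟨S, hS, rfl, rfl⟩ := h
  exact ⟨sum_range_add_le_sum_id S 1 fun i hi => (mem_Icc.1 (hS hi)).1,
    sum_id_le_sum_range_sub S L fun i hi => (mem_Icc.1 (hS hi)).2⟩

theorem add_mem_rankSums_succ {R L m x : ℕ} (hx : 1 ≤ x) (hxL : x ≤ L)
    (h : m ∈ rankSums R (x - 1)) : m + x ∈ rankSums (R + 1) L := by
  obtain ⟨S, hS, hcard, hsum⟩ := h
  have hxS : x ∉ S := fun hxS => by have := (mem_Icc.1 (hS hxS)).2; omega
  refine ⟨insert x S, insert_subset (mem_Icc.2 ⟨hx, hxL⟩) ?_, ?_, ?_⟩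
  · exact hS.trans (Icc_subset_Icc_right (by omega))
  · rw [card_insert_of_notMem hxS, hcard]
  · rw [sum_insert hxS, hsum, add_comm]

theorem mem_rankSums_of_le_of_le {R L m : ℕ} (hRL : R ≤ L)
    (hlo : ∑ k ∈ range R, (1 + k) ≤ m) (hhi : m ≤ ∑ k ∈ range R, (L - k)) :
    m ∈ rankSums R L := by
  induction R generalizing L m with
  | zero => exact ⟨∅, empty_subset _, rfl, by simp_all⟩
  | succ R ih =>
    rw [sum_range_succ] at hlo
    rw [sum_range_succ'] at hhi
    set lo := ∑ k ∈ range R, (1 + k)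
    by_cases hm : lo + L ≤ m
    · have hhi' : m - L ≤ ∑ k ∈ range R, (L - 1 - k) := by
        rw [sum_congr rfl fun k _ => show L - 1 - k = L - (k + 1) by omega]
        omega
      have := add_mem_rankSums_succ (by omega) le_rfl (ih (by omega) (by omega) hhi')
      rwa [Nat.sub_add_cancel (by omega)] at this
    · have hmin : lo ∈ rankSums R (m - lo - 1) :=
        ⟨Icc 1 R, Icc_subset_Icc_right (by omega), by simp, sum_Icc_one_id R⟩
      have := add_mem_rankSums_succ (L := L) (by omega) (by omega) hmin
      rwa [Nat.add_sub_cancel' (by omega)] at this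

theorem mem_rankSums_iff {R L m : ℕ} (hRL : R ≤ L) :
    m ∈ rankSums R L ↔ ∑ k ∈ range R, (1 + k) ≤ m ∧ m ≤ ∑ k ∈ range R, (L - k) :=
  ⟨sum_range_bounds_of_mem_rankSums, fun ⟨hlo, hhi⟩ => mem_rankSums_of_le_of_le hRL hlo hhi⟩

theorem rank_sums_attain_every_intermediate_value_general (R L : ℕ) (h2 : R ≤ L) :
    {m : ℕ | ∃ S : Finset ℕ, S ⊆ Finset.Icc 1 L ∧ S.card = R ∧ ∑ i ∈ S, i = m} =
      {m : ℕ | R * (R + 1) / 2 ≤ m ∧ m ≤ R * (2 * L - R + 1) / 2} := by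
  ext m
  have hlo := two_mul_sum_range_one_add R
  have hhi := two_mul_sum_range_sub h2
  rw [← rankSums, mem_rankSums_iff h2, Set.mem_ofPred_eq]
  omega

/-- For `1 ≤ R ≤ L`, the set of sums `Σ_{i ∈ S} i` over `R`-element subsets `S`
of `{1, …, L}` is exactly the set of integers `m` with
`R(R+1)/2 ≤ m ≤ R(2L - R + 1)/2`. -/
theorem rank_sums_attain_every_intermediate_value (R L : ℕ) (h1 : 1 ≤ R) (h2 : R ≤ L) :
    {m : ℕ | ∃ S : Finset ℕ, S ⊆ Finset.Icc 1 L ∧ S.card = R ∧ ∑ i ∈ S, i = m} =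
      {m : ℕ | R * (R + 1) / 2 ≤ m ∧ m ≤ R * (2 * L - R + 1) / 2} :=
  rank_sums_attain_every_intermediate_value_general R L h2
end

section
/- Let 0 < R < L be natural numbers. For a binary ranking of length L with exactly R relevant documents, at rank positions r_1 < r_2 < … < r_R, define the normalized recall R_norm = 1 − (Σ_{i=1}^{R} r_i − Σ_{i=1}^{R} i) / (R(L − R)). Then the set of values attained by R_norm over all such rankings is exactly {1 − m/(R(L−R)) : m ∈ ℕ, 0 ≤ m ≤ R(L−R)}. In particular, the attained values of R_norm are equally spaced with gap 1/(R(L−R)), so R_norm restricted to its attained values is an interval scale in the binary case. -/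
open Finset

lemma gauss (n : ℕ) : 2 * ∑ i ∈ Icc 1 n, i = n * (n+1) := by
  induction n with
  | zero => simp
  | succ k ih =>
    rw [← Finset.insert_Icc_right_eq_Icc_add_one (by omega), Finset.sum_insert (by simp)]
    ring_nf
    ring_nf at ih
    omega

lemma icc_split (a L : ℕ) (h : a ≤ L) :
    ∑ i ∈ Icc 1 L, i = ∑ i ∈ Icc 1 a, i + ∑ i ∈ Icc (a+1) L, i := by
  rw [← Finset.sum_union]
  · congr 1
    ext x
    simp only [Finset.mem_union, Finset.mem_Icc]
    omega
  · rw [Finset.disjoint_left]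
    intro x hx hx'
    simp only [Finset.mem_Icc] at hx hx'
    omega

lemma minsum : ∀ (n : ℕ) (S : Finset ℕ), S.card = n → (∀ x ∈ S, 1 ≤ x) →
    ∑ i ∈ Icc 1 n, i ≤ ∑ i ∈ S, i := by
  intro n
  induction n with
  | zero => intro S h _; simp
  | succ k ih =>
    intro S hc hpos
    have hne : S.Nonempty := by rw [← Finset.card_pos, hc]; omega
    obtain ⟨M, hMS, hM⟩ := S.exists_max_image id hne
    have hsub : S ⊆ Icc 1 M := by
      intro x hx
      simp only [Finset.mem_Icc]
      exact ⟨hpos x hx, hM x hx⟩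
    have hMle : k + 1 ≤ M := by
      have := Finset.card_le_card hsub
      simpa [hc] using this
    have hcard' : (S.erase M).card = k := by
      rw [Finset.card_erase_of_mem hMS, hc]; omega
    have := ih (S.erase M) hcard' (fun x hx => hpos x (Finset.mem_of_mem_erase hx))
    have hsum : ∑ i ∈ S, i = ∑ i ∈ S.erase M, i + M := by
      rw [← Finset.sum_erase_add S _ hMS]
    rw [← Finset.insert_Icc_right_eq_Icc_add_one (by omega), Finset.sum_insert (by simp)]
    omega

lemma maxsum (L R : ℕ) (hRL : R ≤ L) (S : Finset ℕ) (hS : S ⊆ Icc 1 L)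
    (hc : S.card = R) : ∑ i ∈ S, i ≤ ∑ i ∈ Icc (L - R + 1) L, i := by
  have hTcard : (Icc 1 L \ S).card = L - R := by
    rw [Finset.card_sdiff_of_subset hS, Nat.card_Icc, hc]; omega
  have hTlo := minsum (L - R) (Icc 1 L \ S) hTcard
    (fun x hx => (Finset.mem_Icc.mp (Finset.mem_sdiff.mp hx).1).1)
  have hsplit : ∑ i ∈ Icc 1 L, i = ∑ i ∈ S, i + ∑ i ∈ Icc 1 L \ S, i := by
    rw [← Finset.sum_sdiff hS]; ring
  have := icc_split (L - R) L (by omega)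
  omega

lemma icc_top_sum (L R : ℕ) (hRL : R ≤ L) :
    ∑ i ∈ Icc (L - R + 1) L, i = ∑ i ∈ Icc 1 R, i + R * (L - R) := by
  obtain ⟨K, rfl⟩ : ∃ K, L = R + K := ⟨L - R, by omega⟩
  have h1 := gauss (R + K)
  have h2 := gauss K
  have h3 := gauss R
  have h4 := icc_split K (R + K) (by omega)
  have hK : R + K - R = K := by omega
  rw [hK]
  have : K + 1 = K + 1 := rfl
  nlinarith [h1, h2, h3, h4]

lemma step (L R : ℕ) (hR : 0 < R) (hRL : R ≤ L) (S : Finset ℕ) (hS : S ⊆ Icc 1 L)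
    (hc : S.card = R) (hlt : ∑ i ∈ S, i < ∑ i ∈ Icc (L - R + 1) L, i) :
    ∃ S' : Finset ℕ, S' ⊆ Icc 1 L ∧ S'.card = R ∧ ∑ i ∈ S', i = ∑ i ∈ S, i + 1 := by
  by_cases hx : ∃ x ∈ S, x + 1 ∉ S ∧ x + 1 ≤ L
  · obtain ⟨x, hxS, hx1, hxL⟩ := hx
    refine ⟨insert (x+1) (S.erase x), ?_, ?_, ?_⟩
    · intro y hy
      rcases Finset.mem_insert.mp hy with rfl | hy
      · simp only [Finset.mem_Icc]; omega
      · exact hS (Finset.mem_of_mem_erase hy)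
    · rw [Finset.card_insert_of_notMem (fun h => hx1 (Finset.mem_of_mem_erase h)),
        Finset.card_erase_of_mem hxS, hc]
      omega
    · rw [Finset.sum_insert (fun h => hx1 (Finset.mem_of_mem_erase h))]
      have : ∑ i ∈ S, i = ∑ i ∈ S.erase x, i + x := by
        rw [← Finset.sum_erase_add S _ hxS]
      omega
  · exfalso
    push_neg at hx
    -- every x in S with x+1 ≤ L has x+1 ∈ S; show S = Icc (L-R+1) L
    have hne : S.Nonempty := by rw [← Finset.card_pos, hc]; omega
    obtain ⟨y, hyS, hy⟩ := S.exists_min_image id hne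
    have hup : ∀ z, y ≤ z → z ≤ L → z ∈ S := by
      intro z
      induction z with
      | zero =>
        intro h1 h2
        have : 1 ≤ y := (Finset.mem_Icc.mp (hS hyS)).1
        omega
      | succ n ihn =>
        intro h1 h2
        rcases Nat.lt_or_ge y (n+1) with h | h
        · have hn : n ∈ S := ihn (by omega) (by omega)
          by_contra h
          exact absurd (hx n hn h) (by omega)
        · have : y = n + 1 := by omega
          rwa [← this]
    have hsub : Icc y L ⊆ S := fun z hz => by
      simp only [Finset.mem_Icc] at hz; exact hup z hz.1 hz.2
    have hyL : y ≤ L := (Finset.mem_Icc.mp (hS hyS)).2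
    have hsub2 : S ⊆ Icc y L := fun z hz => by
      simp only [Finset.mem_Icc]
      exact ⟨hy z hz, (Finset.mem_Icc.mp (hS hz)).2⟩
    have hSeq : S = Icc y L := Finset.Subset.antisymm hsub2 hsub
    have hy2 : y = L - R + 1 := by
      have := hSeq ▸ hc
      rw [Nat.card_Icc] at this
      omega
    rw [hSeq, hy2] at hlt
    omega

lemma exists_S (L R : ℕ) (hR : 0 < R) (hRL : R ≤ L) :
    ∀ m : ℕ, m ≤ R * (L - R) → ∃ S : Finset ℕ, S ⊆ Icc 1 L ∧ S.card = R ∧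
      ∑ i ∈ S, i = ∑ i ∈ Icc 1 R, i + m := by
  intro m
  induction m with
  | zero =>
    intro _
    exact ⟨Icc 1 R, Finset.Icc_subset_Icc_right hRL, by rw [Nat.card_Icc]; omega, by omega⟩
  | succ n ihn =>
    intro hn
    obtain ⟨S, hS, hc, hsum⟩ := ihn (by omega)
    have htop := icc_top_sum L R hRL
    obtain ⟨S', h1, h2, h3⟩ := step L R hR hRL S hS hc (by omega)
    exact ⟨S', h1, h2, by omega⟩

/-- For `0 < R < L`, the set of values attained by the normalized recall
`R_norm = 1 - (Σ r_i - Σ i)/(R(L-R))` over all binary rankings of length `L`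
with exactly `R` relevant documents is exactly `{1 - m/(R(L-R)) : 0 ≤ m ≤ R(L-R)}`;
in particular, the attained values are equally spaced with gap `1/(R(L-R))`,
so `R_norm` is an interval scale in the binary case. -/
theorem normalized_recall_values_equally_spaced (R L : ℕ) (h1 : 0 < R) (h2 : R < L) :
    ({v : ℝ | ∃ S : Finset ℕ, S ⊆ Finset.Icc 1 L ∧ S.card = R ∧
        v = 1 - ((∑ i ∈ S, (i : ℝ)) - ∑ i ∈ Finset.Icc 1 R, (i : ℝ)) /
          ((R : ℝ) * ((L : ℝ) - (R : ℝ)))} =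
      {v : ℝ | ∃ m : ℕ, m ≤ R * (L - R) ∧
        v = 1 - (m : ℝ) / ((R : ℝ) * ((L : ℝ) - (R : ℝ)))}) ∧
    (∀ u ∈ {v : ℝ | ∃ m : ℕ, m ≤ R * (L - R) ∧
        v = 1 - (m : ℝ) / ((R : ℝ) * ((L : ℝ) - (R : ℝ)))},
      ∀ w ∈ {v : ℝ | ∃ m : ℕ, m ≤ R * (L - R) ∧
        v = 1 - (m : ℝ) / ((R : ℝ) * ((L : ℝ) - (R : ℝ)))},
      u < w →
      (¬ ∃ z ∈ {v : ℝ | ∃ m : ℕ, m ≤ R * (L - R) ∧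
        v = 1 - (m : ℝ) / ((R : ℝ) * ((L : ℝ) - (R : ℝ)))}, u < z ∧ z < w) →
      w - u = 1 / ((R : ℝ) * ((L : ℝ) - (R : ℝ)))) := by
  have hD : (0:ℝ) < (R : ℝ) * ((L : ℝ) - (R : ℝ)) := by
    have : (R:ℝ) < L := by exact_mod_cast h2
    have : (0:ℝ) < (R:ℝ) := by exact_mod_cast h1
    nlinarith [show (R:ℝ) < L from by exact_mod_cast h2]
  constructor
  · ext v
    simp only [Set.mem_setOf_eq]
    constructor
    · rintro ⟨S, hS, hc, rfl⟩
      have hlo := minsum R S hc (fun x hx => (Finset.mem_Icc.mp (hS hx)).1)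
      have hhi := maxsum L R h2.le S hS hc
      have htop := icc_top_sum L R h2.le
      refine ⟨(∑ i ∈ S, i) - (∑ i ∈ Finset.Icc 1 R, i), by omega, ?_⟩
      congr 1
      rw [Nat.cast_sub hlo]
      push_cast
      ring
    · rintro ⟨m, hm, rfl⟩
      obtain ⟨S, hS, hc, hsum⟩ := exists_S L R h1 h2.le m hm
      refine ⟨S, hS, hc, ?_⟩
      congr 1
      rw [show ((m:ℝ)) = ((∑ i ∈ S, i : ℕ):ℝ) - ((∑ i ∈ Finset.Icc 1 R, i : ℕ):ℝ) by
        rw [hsum]; push_cast; ring]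
      push_cast
      ring
  · rintro u ⟨m1, hm1, rfl⟩ w ⟨m2, hm2, rfl⟩ hlt hnb
    have hmlt : m2 < m1 := by
      have hd : (m2:ℝ) / ((R : ℝ) * ((L : ℝ) - (R : ℝ))) <
          (m1:ℝ) / ((R : ℝ) * ((L : ℝ) - (R : ℝ))) := by linarith
      have := (div_lt_div_iff_of_pos_right hD).mp hd
      exact_mod_cast this
    have heq : m1 = m2 + 1 := by
      by_contra h
      apply hnb
      refine ⟨1 - ((m2+1 : ℕ) : ℝ) / ((R : ℝ) * ((L : ℝ) - (R : ℝ))), ⟨m2+1, by omega, rfl⟩, ?_, ?_⟩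
      · have : ((m2:ℝ)+1) < (m1:ℝ) := by exact_mod_cast (by omega : m2 + 1 < m1)
        push_cast
        have := (div_lt_div_iff_of_pos_right hD).mpr this
        linarith
      · have : (m2:ℝ) < (m2:ℝ) + 1 := by linarith
        push_cast
        have := (div_lt_div_iff_of_pos_right hD).mpr this
        linarith
    subst heq
    push_cast
    field_simp
    ring
end
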